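/- There exists a constant C > 0, depending only on δ, such that if g is an isometry of a δ-hyperbolic geodesic space X with basepoint x_0 which is a product of isometries g = g₁ g₂ ⋯ g_n satisfying d(x_0, g_i x_0) ≥ (g_{i−1}^{−1} x_0 | g_i x_0)_{x_0} + (g_i^{−1} x_0 | g_{i+1} x_0)_{x_0} + C for all i (with cyclic index conventions g_{n+1} = g₁ and g₀ = g_n), then the translation length of g satisfies τ(g) ≥ Σ_{i=1}^n ( d(x_0, g_i x_0) − (g_{i−1}^{−1} x_0 | g_i x_0)_{x_0} − (g_i^{−1} x_0 | g_{i+1} x_0)_{x_0} − C ); in particular g is hyperbolic. Furthermore, any geodesic from x_0 to g x_0, and any axis of g, passes within distance (g_{i−1}^{−1} x_0 | g_i x_0)_{x_0} + (g_i^{−1} x_0 | g_{i+1} x_0)_{x_0} + C of each point g₁ ⋯ g_i x_0. -/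

import Mathlib

open MeasureTheory ProbabilityTheory Filter Metric Set Pointwise

noncomputable section

namespace RandomSubgroups

variable {G : Type*} [Group G] {X : Type*} [MetricSpace X]

/-- The Gromov product `(x|y)_w`. -/
def gp (w x y : X) : ℝ := (dist w x + dist w y - dist x y) / 2

/-- `γ` is a unit-speed geodesic from `x` to `y`, parametrized on `[0, dist x y]`. -/
def IsGeodesicFrom (γ : ℝ → X) (x y : X) : Prop :=
  γ 0 = x ∧ γ (dist x y) = y ∧
    ∀ s ∈ Icc (0 : ℝ) (dist x y), ∀ t ∈ Icc (0 : ℝ) (dist x y),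
      dist (γ s) (γ t) = |s - t|

/-- `X` is a geodesic space. -/
def GeodesicSpace (X : Type*) [MetricSpace X] : Prop :=
  ∀ x y : X, ∃ γ : ℝ → X, IsGeodesicFrom γ x y

/-- All geodesic triangles in `X` are δ-slim: each side is contained in the
δ-neighbourhood of the union of the other two sides. -/
def SlimTriangles (X : Type*) [MetricSpace X] (δ : ℝ) : Prop :=
  ∀ x y z : X, ∀ γ₁ γ₂ γ₃ : ℝ → X,
    IsGeodesicFrom γ₁ x y → IsGeodesicFrom γ₂ y z → IsGeodesicFrom γ₃ x z →
      ∀ t ∈ Icc (0 : ℝ) (dist x z),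
        ∃ u ∈ γ₁ '' Icc (0 : ℝ) (dist x y) ∪ γ₂ '' Icc (0 : ℝ) (dist y z),
          dist (γ₃ t) u ≤ δ

/-- A δ-hyperbolic geodesic metric space. -/
def DeltaHyperbolic (X : Type*) [MetricSpace X] (δ : ℝ) : Prop :=
  0 ≤ δ ∧ GeodesicSpace X ∧ SlimTriangles X δ

/-- The group `G` acts on `X` by isometries. -/
def IsometricAction (G : Type*) (X : Type*) [Group G] [MetricSpace X] [MulAction G X] : Prop :=
  ∀ g : G, Isometry fun x : X => g • x

/-- The action of `G` on `X` is acylindrical. -/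
def AcylindricalAction (G : Type*) (X : Type*) [Group G] [MetricSpace X] [MulAction G X] : Prop :=
  ∀ K : ℝ, 0 ≤ K → ∃ R : ℝ, ∃ N : ℕ, ∀ x y : X, R ≤ dist x y →
    {g : G | dist x (g • x) ≤ K ∧ dist y (g • y) ≤ K}.Finite ∧
      Nat.card {g : G | dist x (g • x) ≤ K ∧ dist y (g • y) ≤ K} ≤ N

variable [MulAction G X]

/-- `g` has translation length `τ` (independent of the basepoint `x₀`). -/
def HasTranslationLength (g : G) (x₀ : X) (τ : ℝ) : Prop :=
  Tendsto (fun m : ℕ => dist x₀ ((g ^ m) • x₀) / m) atTop (nhds τ)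

/-- A hyperbolic (loxodromic) element: one with positive translation length. -/
def IsHyperbolicElt (g : G) (x₀ : X) : Prop := ∃ τ : ℝ, 0 < τ ∧ HasTranslationLength g x₀ τ

/-- Two hyperbolic elements with disjoint pairs of fixed points in the Gromov boundary,
expressed via uniformly bounded Gromov products between the two (quasigeodesic) orbits. -/
def IndependentHyperbolic (g h : G) (x₀ : X) : Prop :=
  IsHyperbolicElt g x₀ ∧ IsHyperbolicElt h x₀ ∧
    ∃ C : ℝ, ∀ n m : ℤ, gp x₀ ((g ^ n) • x₀) ((h ^ m) • x₀) ≤ C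

/-- A subgroup is non-elementary if it contains two independent hyperbolic elements. -/
def NonelementarySub (H : Subgroup G) (x₀ : X) : Prop :=
  ∃ g ∈ H, ∃ h ∈ H, IndependentHyperbolic g h x₀

/-- `G` acts acylindrically hyperbolically on `X`, with hyperbolicity constant `δ`
and basepoint `x₀`. -/
structure AcylHypAction (G : Type*) (X : Type*) [Group G] [MetricSpace X] [MulAction G X]
    (δ : ℝ) (x₀ : X) : Prop where
  isom : IsometricAction G X
  hyp : DeltaHyperbolic X δ
  acyl : AcylindricalAction G X
  nonelem : NonelementarySub (⊤ : Subgroup G) x₀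

/-- `N` is the maximal finite normal subgroup `E(G)` of `G`. -/
def IsEG (N : Subgroup G) : Prop :=
  (N : Set G).Finite ∧ N.Normal ∧ ∀ M : Subgroup G, (M : Set G).Finite → M.Normal → M ≤ N

/-- A virtually cyclic subgroup: contains a cyclic subgroup of finite index. -/
def IsVirtuallyCyclic (H : Subgroup G) : Prop :=
  ∃ c : G, Subgroup.zpowers c ≤ H ∧ (Subgroup.zpowers c).relIndex H ≠ 0

/-- `E` is the maximal virtually cyclic subgroup `E(g)` containing `g`. -/
def IsEg (g : G) (E : Subgroup G) : Prop :=
  g ∈ E ∧ IsVirtuallyCyclic E ∧ ∀ E' : Subgroup G, g ∈ E' → IsVirtuallyCyclic E' → E' ≤ E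

/-- `g` is weakly asymmetric: it is hyperbolic and `E(g) = ⟨g⟩ ⋉ E(G)`
(note `⟨g⟩ ⊔ E(G) = ⟨g⟩ E(G)` as `E(G)` is normal, and the extension splits automatically
since a hyperbolic element has infinite order). -/
def WeaklyAsymmetric (g : G) (x₀ : X) (EG : Subgroup G) : Prop :=
  IsHyperbolicElt g x₀ ∧ IsEg g (Subgroup.zpowers g ⊔ EG)

/-- A bi-infinite `(1, O(δ))`-quasigeodesic which is an axis for `g`: it is coarsely
translated by `g` by its translation length (equivalently, it connects the two fixed
points of `g` in the Gromov boundary). -/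
def IsAxis (δ : ℝ) (g : G) (x₀ : X) (α : ℝ → X) : Prop :=
  (∀ s t : ℝ, |s - t| - 100 * (δ + 1) ≤ dist (α s) (α t) ∧
      dist (α s) (α t) ≤ |s - t| + 100 * (δ + 1)) ∧
    ∃ τ : ℝ, 0 < τ ∧ HasTranslationLength g x₀ τ ∧
      ∃ C : ℝ, ∀ t : ℝ, dist (g • α t) (α (t + τ)) ≤ C

/-- `p` is a closest point to `x` on (the image of) `α`. -/
def IsClosestPointOn (α : ℝ → X) (x p : X) : Prop :=
  p ∈ Set.range α ∧ ∀ q ∈ Set.range α, dist x p ≤ dist x q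

/-- `p` is a closest point to `x` on the geodesic segment `γ` from `a` to `b`. -/
def IsClosestPointOnSeg (γ : ℝ → X) (a b x p : X) : Prop :=
  p ∈ γ '' Icc (0 : ℝ) (dist a b) ∧ ∀ q ∈ γ '' Icc (0 : ℝ) (dist a b), dist x p ≤ dist x q

/-- The `K`-stabilizer of the geodesic `[p, q]`. -/
def KStab (K : ℝ) (p q : X) : Set G := {g : G | dist p (g • p) ≤ K ∧ dist q (g • q) ≤ K}

/-- `g` is `K`-asymmetric: `g` is hyperbolic with axis `α`, and for `p` a closest point
on `α` to the basepoint `x₀`, the `K`-stabilizer of `[p, g p]` equals `E(G)`. -/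
def KAsymmetric (δ K : ℝ) (g : G) (x₀ : X) (EG : Subgroup G) : Prop :=
  IsHyperbolicElt g x₀ ∧ ∃ α : ℝ → X, IsAxis δ g x₀ α ∧
    ∀ p : X, IsClosestPointOn α x₀ p → KStab K p (g • p) = (EG : Set G)

/-- `g` is `K`-primitive: with `P` the set of projections of the points `g^i x₀` to an
axis of `g`, every element of `E(g)` moves `P` Hausdorff distance at most `K`. -/
def KPrimitive (δ K : ℝ) (g : G) (x₀ : X) : Prop :=
  ∃ α : ℝ → X, IsAxis δ g x₀ α ∧
    ∀ p : ℤ → X, (∀ i : ℤ, IsClosestPointOn α ((g ^ i) • x₀) (p i)) →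
      ∀ E : Subgroup G, IsEg g E → ∀ h ∈ E,
        hausdorffDist (Set.range p) ((fun x : X => h • x) '' Set.range p) ≤ K

/-- `h` switches the two fixed points of the hyperbolic element `g` in the boundary,
expressed via Gromov products along the orbit of `g` going to infinity. -/
def SwitchesEndpoints (g h : G) (x₀ : X) : Prop :=
  Tendsto (fun n : ℕ => gp x₀ ((g ^ (n : ℤ)) • x₀) (h • ((g ^ (-(n : ℤ))) • x₀)))
    atTop atTop ∧
  Tendsto (fun n : ℕ => gp x₀ ((g ^ (-(n : ℤ))) • x₀) (h • ((g ^ (n : ℤ)) • x₀)))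
    atTop atTop

/-- `g` is irreversible: no element of `E(g)` switches its two fixed points at infinity. -/
def Irreversible (g : G) (x₀ : X) : Prop :=
  ∀ E : Subgroup G, IsEg g E → ∀ h ∈ E, ¬ SwitchesEndpoints g h x₀

/-- The support of a measure on a countable discrete group. -/
def suppSet [MeasurableSpace G] (μ : Measure G) : Set G := {g : G | μ {g} ≠ 0}

/-- An admissible probability distribution: its support generates a non-elementary
subgroup containing a weakly asymmetric element, and the support has bounded image in `X`. -/
def Admissible [MeasurableSpace G] (μ : Measure G) (x₀ : X) (EG : Subgroup G) : Prop :=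
  IsProbabilityMeasure μ ∧
  NonelementarySub (Subgroup.closure (suppSet μ)) x₀ ∧
  (∃ g ∈ Subgroup.closure (suppSet μ), WeaklyAsymmetric g x₀ EG) ∧
  Bornology.IsBounded ((fun g : G => g • x₀) '' suppSet μ)

/-- The position of the random walk with steps `s` at time `n`:
`w_n = s_0 s_1 ⋯ s_{n-1}`. -/
def walk {Ω : Type*} (s : ℕ → Ω → G) (n : ℕ) (ω : Ω) : G :=
  ((List.range n).map fun i => s i ω).prod

/-- The steps `s` form a `μ`-random walk on the probability space `(Ω, P)`:
they are independent and identically `μ`-distributed. -/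
def IsRandomWalk {Ω : Type*} [MeasurableSpace Ω] [MeasurableSpace G]
    (P : Measure Ω) (μ : Measure G) (s : ℕ → Ω → G) : Prop :=
  IsProbabilityMeasure P ∧ (∀ i, Measurable (s i)) ∧
    iIndepFun (m := fun _ => ‹MeasurableSpace G›) s P ∧ ∀ i, Measure.map (s i) P = μ

/-- Finitely many jointly independent random walks, with step distributions `μ i`. -/
def AreRandomWalks {Ω : Type*} [MeasurableSpace Ω] [MeasurableSpace G] {k : ℕ}
    (P : Measure Ω) (μ : Fin k → Measure G) (s : Fin k → ℕ → Ω → G) : Prop :=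
  IsProbabilityMeasure P ∧ (∀ i j, Measurable (s i j)) ∧
    iIndepFun (m := fun _ : Fin k × ℕ => ‹MeasurableSpace G›) (fun p => s p.1 p.2) P ∧
    ∀ i j, Measure.map (s i j) P = μ i

/-- `L` is the (almost sure) drift of the random walk with steps `s`. -/
def IsDrift {Ω : Type*} [MeasurableSpace Ω] (P : Measure Ω) (s : ℕ → Ω → G)
    (x₀ : X) (L : ℝ) : Prop :=
  ∀ᵐ ω ∂P, Tendsto (fun n : ℕ => dist x₀ (walk s n ω • x₀) / n) atTop (nhds L)

/-- The paths `γ`, `γ'`, restricted to the parameter sets `I`, `I'`, have an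
`(A,B)`-match: subsegments of length at least `A` of each, such that some `G`-translate
of the first is at Hausdorff distance at most `B` from the second. -/
def HasMatch (G : Type*) [Group G] [MulAction G X] (γ γ' : ℝ → X) (I I' : Set ℝ)
    (A B : ℝ) : Prop :=
  ∃ a b a' b' : ℝ, Icc a b ⊆ I ∧ Icc a' b' ⊆ I' ∧ A ≤ b - a ∧ A ≤ b' - a' ∧
    ∃ g : G, hausdorffDist ((fun x : X => g • x) '' (γ '' Icc a b)) (γ' '' Icc a' b') ≤ B

/-- A subgroup `H` is geometrically separated in `X`. -/
def GeomSeparated (G : Type*) (X : Type*) [Group G] [MetricSpace X] [MulAction G X]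
    (H : Subgroup G) : Prop :=
  ∀ (x₀ : X) (R : ℝ), 0 ≤ R → ∃ B : ℝ, ∀ g : G, g ∉ H →
    Metric.diam ({x : X | ∃ h ∈ H, dist x ((g * h) • x₀) ≤ R} ∩
      {x : X | ∃ h ∈ H, dist x (h • x₀) ≤ R}) ≤ B

/-- Word length of `g` over the symmetrized alphabet `S`. -/
def wordLength (S : Set G) (g : G) : ℕ :=
  sInf {m : ℕ | ∃ f : Fin m → G, (∀ i, f i ∈ S ∨ (f i)⁻¹ ∈ S) ∧ g = (List.ofFn f).prod}

/-- Word distance over the alphabet `S`. -/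
def wordDist (S : Set G) (g h : G) : ℕ := wordLength S (g⁻¹ * h)

/-- Gromov product for the word metric over `S`. -/
def gpWord (S : Set G) (w x y : G) : ℝ :=
  ((wordDist S w x : ℝ) + (wordDist S w y : ℝ) - (wordDist S x y : ℝ)) / 2

/-- Gromov hyperbolicity of the word metric on `G` over the alphabet `S`, in the
four-point formulation. -/
def WordHyperbolic (S : Set G) (δ : ℝ) : Prop :=
  ∀ w x y z : G, min (gpWord S w x z) (gpWord S w z y) - δ ≤ gpWord S w x y

/-- `h'` is reachable from `h` in at most `m` steps in `Cay(G, Y ⊔ H)` by an admissible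
path, i.e. one containing no edge of `Cay(H, H)` (an `H`-labelled edge starting in `H`). -/
def RelReachable (Y : Set G) (H : Subgroup G) (h h' : G) (m : ℕ) : Prop :=
  ∃ p : ℕ → G, p 0 = h ∧ p m = h' ∧ ∀ i < m, ∃ a : G,
    p (i + 1) = p i * a ∧ ((a ∈ Y ∨ a⁻¹ ∈ Y) ∨ (a ∈ H ∧ p i ∉ H))

/-- `H` is hyperbolically embedded in `G` with respect to the generating set `Y`:
`Cay(G, Y ⊔ H)` is hyperbolic and the relative metric `d̂_H` on `H` is proper. -/
def HypEmbeddedWrt (H : Subgroup G) (Y : Set G) : Prop :=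
  Subgroup.closure Y = (⊤ : Subgroup G) ∧
  (∃ δ : ℝ, 0 ≤ δ ∧ WordHyperbolic (Y ∪ (H : Set G)) δ) ∧
  ∀ r : ℕ, {x : G | x ∈ H ∧ ∃ m ≤ r, RelReachable Y H 1 x m}.Finite

/-- `H` is hyperbolically embedded in `G` (with respect to some generating set). -/
def HypEmbedded (H : Subgroup G) : Prop := ∃ Y : Set G, HypEmbeddedWrt H Y

/-- `G` is an acylindrically hyperbolic group. -/
def AcylindricallyHyperbolic (G : Type*) [Group G] : Prop :=
  ∃ (X : Type) (_ : MetricSpace X) (_ : MulAction G X) (δ : ℝ) (x₀ : X),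
    AcylHypAction G X δ x₀

/-- The subgroup `H E(G) = {he : h ∈ H, e ∈ E(G)}` is the (internal) semidirect product
`H ⋉ E(G)`: every element factors uniquely as `h * e`. -/
def IsInternalSemidirect (H EG : Subgroup G) : Prop :=
  (((H : Set G) * (EG : Set G)) = ((H ⊔ EG : Subgroup G) : Set G)) ∧
  ∀ h ∈ H, ∀ h' ∈ H, ∀ e ∈ EG, ∀ e' ∈ EG, h * e = h' * e' → h = h' ∧ e = e'

/-- Rescaled length on the free group on `Fin k`: the generator `i` gets length
`dist x₀ (a i • x₀)`; the distance between vertices `u, v` of the rescaled Cayley graph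
`Γ_H` (a tree) is `rescaledLength (u⁻¹ * v)`. -/
def rescaledLength {k : ℕ} (a : Fin k → G) (x₀ : X) (u : FreeGroup (Fin k)) : ℝ :=
  ((FreeGroup.toWord u).map fun p => dist x₀ (a p.1 • x₀)).sum


/-- `ε`-length bounds for a family of elements with drift parameters `L i` and
lengths `n i`. -/
def LengthBounds (x₀ : X) {k : ℕ} (w : Fin k → G) (L : Fin k → ℝ) (n : Fin k → ℕ)
    (ε : ℝ) : Prop :=
  ∀ i, (1 - ε) * L i * (n i : ℝ) ≤ dist x₀ (w i • x₀) ∧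
    dist x₀ (w i • x₀) ≤ (1 + ε) * L i * (n i : ℝ)

/-- The symmetric generating set `{w i, (w i)⁻¹}`. -/
def symSet {k : ℕ} (w : Fin k → G) : Set G :=
  Set.range w ∪ (fun g : G => g⁻¹) '' Set.range w

/-- `K`-Gromov product bounds for the symmetric generating set of `w`. -/
def GromovBounds (x₀ : X) {k : ℕ} (w : Fin k → G) (K : ℝ) : Prop :=
  ∀ a ∈ symSet w, ∀ b ∈ symSet w, a ≠ b → gp x₀ (a • x₀) (b • x₀) ≤ K

/-- The family has an `M`-large match (here `M = εLn`): for some `i < j`, a `G`-translate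
of the subgeodesic `[γ_j(M), γ_j(‖γ_j‖ - M)]` is contained in a `2δ`-neighbourhood
of `γ_i`, where `γ_l` is a geodesic from `x₀` to `w l • x₀`. -/
def HasLargeMatchElems (δ : ℝ) (x₀ : X) {k : ℕ} (w : Fin k → G) (M : ℝ) : Prop :=
  ∃ i j : Fin k, i < j ∧ ∃ γi γj : ℝ → X,
    IsGeodesicFrom γi x₀ (w i • x₀) ∧ IsGeodesicFrom γj x₀ (w j • x₀) ∧
    ∃ g : G, ∀ t ∈ Icc M (dist x₀ (w j • x₀) - M),
      ∃ u ∈ γi '' Icc (0 : ℝ) (dist x₀ (w i • x₀)), dist (g • γj t) u ≤ 2 * δ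

/-- A signed generator: `(i, true) ↦ w i` and `(i, false) ↦ (w i)⁻¹`. -/
def signedElem {k : ℕ} (w : Fin k → G) (σ : Fin k × Bool) : G :=
  if σ.2 then w σ.1 else (w σ.1)⁻¹

/-- The family is `K`-unmatched: for all signed indices `i, i'` with `i ≤ j`, `i' ≤ j`,
`i ≠ -i'`, integers `0 ≤ ℓ ≤ ‖γ_i‖` and `0 ≤ t ≤ K`, no geodesic `η(i, i', K, ℓ)` — from
the point of `γ_i` at distance `ℓ` from its endpoint `w_i x₀` to the point of
`w_i γ_{i'}` at distance `K` from `w_i x₀` — is contained in a `2δ`-neighbourhood of a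
subgeodesic of `γ_j` starting at `γ_j(t)`. -/
def UnmatchedElems (δ : ℝ) (x₀ : X) {k : ℕ} (w : Fin k → G) (K : ℝ) : Prop :=
  ∀ σ σ' : Fin k × Bool, ∀ j : Fin k, σ.1 ≤ j → σ'.1 ≤ j →
    ¬(σ.1 = σ'.1 ∧ σ.2 ≠ σ'.2) →
    ∀ γi γi' γj : ℝ → X,
      IsGeodesicFrom γi x₀ (signedElem w σ • x₀) →
      IsGeodesicFrom γi' x₀ (signedElem w σ' • x₀) →
      IsGeodesicFrom γj x₀ (w j • x₀) →
      ∀ ℓ : ℕ, (ℓ : ℝ) ≤ dist x₀ (signedElem w σ • x₀) →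
        K ≤ dist x₀ (signedElem w σ' • x₀) →
        ∀ η : ℝ → X,
          IsGeodesicFrom η (γi (dist x₀ (signedElem w σ • x₀) - (ℓ : ℝ)))
            (signedElem w σ • γi' K) →
          ∀ t : ℝ, 0 ≤ t → t ≤ K →
            ¬ ∃ u ∈ Icc t (dist x₀ (w j • x₀)),
              ∀ z ∈ η '' Icc (0 : ℝ)
                  (dist (γi (dist x₀ (signedElem w σ • x₀) - (ℓ : ℝ)))
                    (signedElem w σ • γi' K)),
                ∃ y ∈ γj '' Icc t u, dist z y ≤ 2 * δ

end RandomSubgroups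

open RandomSubgroups MeasureTheory Filter Set

/-!
The points `zⱼ = g₁ ⋯ gⱼ x₀` of the periodic word `g₁ ⋯ gₙ g₁ ⋯ gₙ ⋯` form a chain whose steps
`d(zⱼ, zⱼ₊₁) = d(x₀, gⱼ₊₁ x₀)` are long compared with the Gromov products at its corners, which
are the products `(gⱼ⁻¹ x₀ | gⱼ₊₁ x₀)_{x₀}` translated by `zⱼ`. In a `δ`-hyperbolic space the
four-point condition (with constant `3δ`) shows by induction that such a chain never backtracks:
`(z₀ | zⱼ₊₁)_{zⱼ}` stays below the corner product plus `3δ`. Hence `d(z₀, z_k)` grows by at least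
`d(zⱼ, zⱼ₊₁) - 2 (corner) - 6δ` at every step, which bounds `τ(g) = lim d(x₀, gᵐ x₀) / m` from
below, and every `zᵢ` is almost on a geodesic between any two chain points on either side of it.
For an axis `α`, the orbit points `g^{±m} x₀` stay within bounded distance of `α` because `g`
coarsely translates `α`; as `zᵢ` is almost on a geodesic between them and far from both, thin
quadrilaterals put `zᵢ` near `α`.
-/

lemma Function.Periodic.sum_range_mul {M : Type*} [AddCommMonoid M] {f : ℕ → M} {n : ℕ}
    (hf : Function.Periodic f n) (m : ℕ) :
    ∑ j ∈ Finset.range (m * n), f j = m • ∑ j ∈ Finset.range n, f j := by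
  induction m with
  | zero => simp
  | succ m ih =>
    have hper (j : ℕ) : f (m * n + j) = f j := by
      simpa [add_comm] using hf.nat_mul m j
    rw [add_one_mul, Finset.sum_range_add, ih, succ_nsmul]
    simp only [hper]

lemma apply_add_one_mod_add {α : Type*} {f : ℕ → α} {n : ℕ} (h0 : f 0 = f n)
    (h1 : f (n + 1) = f 1) (j : ℕ) {k : ℕ} (hk : k ≤ 1) :
    f ((j + 1) % n + k) = f (j % n + 1 + k) := by
  rcases Nat.eq_zero_or_pos n with rfl | hn
  · simp
  have hlt := Nat.mod_lt j hn
  rw [← Nat.mod_add_mod]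
  rcases (show j % n + 1 < n ∨ j % n + 1 = n by omega) with h | h
  · rw [Nat.mod_eq_of_lt h]
  · rw [h, Nat.mod_self, zero_add]
    interval_cases k
    · exact h0
    · exact h1.symm

namespace RandomSubgroups

section GromovProduct

variable {X : Type*} [MetricSpace X]

lemma gp_comm (w x y : X) : gp w x y = gp w y x := by
  unfold gp; rw [dist_comm x y]; ring

lemma gp_nonneg (w x y : X) : 0 ≤ gp w x y := by
  unfold gp; linarith [dist_triangle_left x y w]

lemma gp_le_dist (w x y : X) : gp w x y ≤ dist w x := by
  unfold gp; linarith [dist_triangle w x y]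

lemma gp_add_gp (w x y : X) : gp w x y + gp x w y = dist w x := by
  unfold gp; rw [dist_comm x w]; ring

lemma gp_self_left (w y : X) : gp w w y = 0 := by
  simp [gp]

def GromovFourPoint (X : Type*) [MetricSpace X] (δ : ℝ) : Prop :=
  ∀ w x y z : X, min (gp w x y) (gp w y z) - δ ≤ gp w x z

lemma GromovFourPoint.nonneg {δ : ℝ} (hδ : GromovFourPoint X δ) (x : X) : 0 ≤ δ := by
  simpa [gp_self_left] using hδ x x x x

end GromovProduct

section Geodesic

variable {X : Type*} [MetricSpace X] {γ : ℝ → X} {x y : X} {t : ℝ}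

namespace IsGeodesicFrom

lemma dist_left (hγ : IsGeodesicFrom γ x y) (ht : t ∈ Icc 0 (dist x y)) :
    dist x (γ t) = t := by
  have h := hγ.2.2 0 ⟨le_rfl, dist_nonneg⟩ t ht
  rw [hγ.1] at h
  rw [h, abs_sub_comm, sub_zero, abs_of_nonneg ht.1]

lemma dist_right (hγ : IsGeodesicFrom γ x y) (ht : t ∈ Icc 0 (dist x y)) :
    dist (γ t) y = dist x y - t := by
  have h := hγ.2.2 t ht (dist x y) ⟨dist_nonneg, le_rfl⟩
  rw [hγ.2.1] at h
  rw [h, abs_sub_comm, abs_of_nonneg (sub_nonneg.2 ht.2)]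

lemma gp_le_dist_apply (hγ : IsGeodesicFrom γ x y) (w : X) (ht : t ∈ Icc 0 (dist x y)) :
    gp w x y ≤ dist w (γ t) := by
  have hx := hγ.dist_left ht
  have hy := hγ.dist_right ht
  unfold gp
  linarith [dist_triangle w (γ t) x, dist_triangle w (γ t) y, dist_comm (γ t) x]

end IsGeodesicFrom

/-- In a triangle `x w y`: `p` is the internal point of the side `[x, y]` and `u` is a point of
the side `[x, w]` that is `δ`-close to `p`. -/
lemma dist_le_gp_add_of_dist_le {w x y p u : X} {δ : ℝ} (hp : dist x p = gp x w y)
    (hu : dist x u + dist u w = dist x w) (hpu : dist p u ≤ δ) :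
    dist w p ≤ gp w x y + 2 * δ := by
  have hgp := gp_add_gp w x y
  linarith [dist_triangle w u p, dist_triangle x u p, dist_comm u w, dist_comm u p, dist_comm w x]

variable {δ : ℝ}

lemma IsGeodesicFrom.exists_dist_le_gp_add (hX : DeltaHyperbolic X δ)
    (hγ : IsGeodesicFrom γ x y) (w : X) :
    ∃ t ∈ Icc 0 (dist x y), dist w (γ t) ≤ gp w x y + 2 * δ := by
  obtain ⟨-, geo, slim⟩ := hX
  obtain ⟨γ₁, hγ₁⟩ := geo x w
  obtain ⟨γ₂, hγ₂⟩ := geo w y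
  have ht : gp x w y ∈ Icc 0 (dist x y) :=
    ⟨gp_nonneg _ _ _, (gp_comm x w y).trans_le (gp_le_dist x y w)⟩
  refine ⟨gp x w y, ht, ?_⟩
  obtain ⟨u, ⟨s, hs, rfl⟩ | ⟨s, hs, rfl⟩, hu⟩ := slim x w y γ₁ γ₂ γ hγ₁ hγ₂ hγ _ ht
  · exact dist_le_gp_add_of_dist_le (hγ.dist_left ht)
      (by rw [hγ₁.dist_left hs, hγ₁.dist_right hs]; ring) hu
  · -- the same estimate, read from the endpoint `y`
    have hp : dist y (γ (gp x w y)) = gp y w x := by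
      rw [dist_comm, hγ.dist_right ht]
      unfold gp
      rw [dist_comm y x, dist_comm y w, dist_comm w x]
      ring
    have hu' : dist y (γ₂ s) + dist (γ₂ s) w = dist y w := by
      rw [dist_comm y, dist_comm _ w, hγ₂.dist_left hs, hγ₂.dist_right hs, dist_comm]; ring
    simpa only [gp_comm w y x] using dist_le_gp_add_of_dist_le hp hu' hu

lemma DeltaHyperbolic.gromovFourPoint (hX : DeltaHyperbolic X δ) : GromovFourPoint X (3 * δ) := by
  intro w x y z
  obtain ⟨γ, hγ⟩ := hX.2.1 x z
  obtain ⟨t, ht, hwt⟩ := hγ.exists_dist_le_gp_add hX w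
  obtain ⟨γ₁, hγ₁⟩ := hX.2.1 x y
  obtain ⟨γ₂, hγ₂⟩ := hX.2.1 y z
  obtain ⟨u, hu, htu⟩ := hX.2.2 x y z γ₁ γ₂ γ hγ₁ hγ₂ hγ t ht
  have hwu : dist w u ≤ gp w x z + 3 * δ := by linarith [dist_triangle w (γ t) u]
  rcases hu with ⟨s, hs, rfl⟩ | ⟨s, hs, rfl⟩
  · linarith [min_le_left (gp w x y) (gp w y z), hγ₁.gp_le_dist_apply w hs]
  · linarith [min_le_right (gp w x y) (gp w y z), hγ₂.gp_le_dist_apply w hs]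

lemma IsGeodesicFrom.exists_dist_le_of_dist_le (hX : DeltaHyperbolic X δ)
    {P Q P' Q' : X} {γ γ' : ℝ → X} (hγ : IsGeodesicFrom γ P Q) (hγ' : IsGeodesicFrom γ' P' Q')
    {W : ℝ} (hP : dist P P' ≤ W) (hQ : dist Q Q' ≤ W) {t : ℝ} (ht : t ∈ Icc 0 (dist P Q))
    (hfarP : W + 2 * δ < dist (γ t) P) (hfarQ : W + δ < dist (γ t) Q) :
    ∃ t' ∈ Icc 0 (dist P' Q'), dist (γ t) (γ' t') ≤ 2 * δ := by
  obtain ⟨-, geo, slim⟩ := hX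
  obtain ⟨γ₁, hγ₁⟩ := geo P Q'
  obtain ⟨γ₂, hγ₂⟩ := geo Q' Q
  obtain ⟨γ₃, hγ₃⟩ := geo P P'
  obtain ⟨u, ⟨s, hs, rfl⟩ | ⟨s, hs, rfl⟩, hu⟩ := slim P Q' Q γ₁ γ₂ γ hγ₁ hγ₂ hγ t ht
  · obtain ⟨v, ⟨r, hr, rfl⟩ | ⟨r, hr, rfl⟩, hv⟩ := slim P P' Q' γ₃ γ' γ₁ hγ₃ hγ' hγ₁ s hs
    · have hPv := hγ₃.dist_left hr
      linarith [hr.2, dist_triangle4 (γ t) (γ₁ s) (γ₃ r) P, dist_comm (γ₃ r) P]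
    · exact ⟨r, hr, by linarith [dist_triangle (γ t) (γ₁ s) (γ' r)]⟩
  · have hQu := hγ₂.dist_right hs
    linarith [hs.1, dist_comm Q' Q, dist_triangle (γ t) (γ₂ s) Q]

end Geodesic

section Chain

variable {X : Type*} [MetricSpace X]

structure IsGromovChain (z : ℕ → X) (q : ℕ → ℝ) (C : ℝ) (N : ℕ) : Prop where
  nonneg : ∀ j, 0 ≤ q j
  add_le_dist : ∀ j < N, q j + q (j + 1) + C ≤ dist (z j) (z (j + 1))
  gp_le : ∀ j, j + 2 ≤ N → gp (z (j + 1)) (z j) (z (j + 2)) ≤ q (j + 1)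

namespace IsGromovChain

variable {z : ℕ → X} {q : ℕ → ℝ} {C δ : ℝ} {N : ℕ}

lemma reverse (hz : IsGromovChain z q C N) :
    IsGromovChain (fun j => z (N - j)) (fun j => q (N - j)) C N where
  nonneg j := hz.nonneg _
  add_le_dist j hj := by
    have h := hz.add_le_dist (N - (j + 1)) (by omega)
    rw [show N - (j + 1) + 1 = N - j by omega, dist_comm] at h
    linarith
  gp_le j hj := by
    have h := hz.gp_le (N - (j + 2)) (by omega)
    rw [show N - (j + 2) + 1 = N - (j + 1) by omega, show N - (j + 2) + 2 = N - j by omega,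
      gp_comm] at h
    exact h

variable (hδ : GromovFourPoint X δ)
include hδ

lemma gp_zero_le (hz : IsGromovChain z q C N) (hC : 2 * δ < C) :
    ∀ j < N, gp (z j) (z 0) (z (j + 1)) ≤ q j + δ := by
  intro j
  induction j with
  | zero => intro _; rw [gp_self_left]; linarith [hz.nonneg 0, hδ.nonneg (z 0)]
  | succ j ih =>
    intro hjN
    show gp (z (j + 1)) (z 0) (z (j + 2)) ≤ q (j + 1) + δ
    have hback : q (j + 1) + C - δ ≤ gp (z (j + 1)) (z 0) (z j) := by
      have h := gp_add_gp (z (j + 1)) (z j) (z 0)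
      rw [gp_comm (z j)] at h
      linarith [ih (by omega), hz.add_le_dist j (by omega), dist_comm (z j) (z (j + 1)),
        gp_comm (z (j + 1)) (z 0) (z j)]
    have h4 := hδ (z (j + 1)) (z j) (z 0) (z (j + 2))
    rw [gp_comm (z (j + 1)) (z j) (z 0)] at h4
    have hcorner := hz.gp_le j (by omega)
    rcases min_cases (gp (z (j + 1)) (z 0) (z j)) (gp (z (j + 1)) (z 0) (z (j + 2))) with
      ⟨hmin, -⟩ | ⟨hmin, -⟩ <;> rw [hmin] at h4 <;> linarith

lemma sum_le_dist (hz : IsGromovChain z q C N) (hC : 2 * δ < C) :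
    ∀ k ≤ N,
      ∑ j ∈ Finset.range k, (dist (z j) (z (j + 1)) - 2 * q j - 2 * δ) ≤ dist (z 0) (z k) := by
  intro k
  induction k with
  | zero => intro _; simp
  | succ k ih =>
    intro hkN
    have hstep : dist (z 0) (z (k + 1)) =
        dist (z 0) (z k) + dist (z k) (z (k + 1)) - 2 * gp (z k) (z 0) (z (k + 1)) := by
      unfold gp; rw [dist_comm (z k) (z 0)]; ring
    rw [Finset.sum_range_succ, hstep]
    linarith [ih (by omega), hz.gp_zero_le hδ hC k (by omega)]

lemma le_dist (hz : IsGromovChain z q C N) (hC : 2 * δ < C) {k : ℕ} (hk : k ≤ N) :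
    k * (C - 2 * δ) - q 0 ≤ dist (z 0) (z k) := by
  have hterm : ∀ j ∈ Finset.range k, q (j + 1) - q j + (C - 2 * δ) ≤
      dist (z j) (z (j + 1)) - 2 * q j - 2 * δ := fun j hj => by
    linarith [hz.add_le_dist j ((Finset.mem_range.1 hj).trans_le hk)]
  have hsum := Finset.sum_le_sum hterm
  rw [Finset.sum_add_distrib, Finset.sum_range_sub, Finset.sum_const, Finset.card_range,
    nsmul_eq_mul] at hsum
  linarith [hz.sum_le_dist hδ hC k hk, hz.nonneg k]

lemma gp_zero_last_le (hz : IsGromovChain z q C N) (hC : 3 * δ < C) {i : ℕ} (hi : 0 < i)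
    (hiN : i < N) : gp (z i) (z 0) (z N) ≤ q i + 2 * δ := by
  have hδ0 := hδ.nonneg (z 0)
  have hfwd := hz.gp_zero_le hδ (by linarith) i hiN
  have hbwd := hz.reverse.gp_zero_le hδ (by linarith) (N - i - 1) (by omega)
  simp only [show N - (N - i - 1) = i + 1 by omega, show N - (N - i - 1 + 1) = i by omega,
    Nat.sub_zero] at hbwd
  have hfar : q i + C - δ ≤ gp (z i) (z N) (z (i + 1)) := by
    linarith [gp_add_gp (z i) (z (i + 1)) (z N), hz.add_le_dist i hiN,
      gp_comm (z i) (z (i + 1)) (z N), gp_comm (z (i + 1)) (z i) (z N)]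
  have h4 := hδ (z i) (z 0) (z N) (z (i + 1))
  rcases min_cases (gp (z i) (z 0) (z N)) (gp (z i) (z N) (z (i + 1))) with
    ⟨hmin, -⟩ | ⟨hmin, -⟩ <;> rw [hmin] at h4 <;> linarith

end IsGromovChain

end Chain

section QuasiGeodesic

variable {X : Type*} [MetricSpace X] {δ c : ℝ}

def IsQuasiGeodesic (σ : ℝ → X) (c : ℝ) : Prop :=
  ∀ s t : ℝ, |s - t| - c ≤ dist (σ s) (σ t) ∧ dist (σ s) (σ t) ≤ |s - t| + c

namespace IsQuasiGeodesic

variable {σ : ℝ → X}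

lemma nonneg (hσ : IsQuasiGeodesic σ c) : 0 ≤ c := by
  simpa using (hσ 0 0).2

lemma comp_isometry {f : X → X} (hf : Isometry f) (hσ : IsQuasiGeodesic σ c) :
    IsQuasiGeodesic (f ∘ σ) c := fun s t => by
  simpa only [Function.comp, hf.dist_eq] using hσ s t

lemma comp_sub (hσ : IsQuasiGeodesic σ c) (r : ℝ) : IsQuasiGeodesic (fun u => σ (r - u)) c :=
  fun s t => by
    simpa only [show r - s - (r - t) = -(s - t) by ring, abs_neg] using hσ (r - s) (r - t)

lemma gp_le (hσ : IsQuasiGeodesic σ c) {a b s : ℝ} (has : a ≤ s) (hsb : s ≤ b) :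
    gp (σ s) (σ a) (σ b) ≤ 3 * c / 2 := by
  have h1 := (hσ s a).2
  have h2 := (hσ s b).2
  have h3 := (hσ a b).1
  rw [abs_of_nonneg (by linarith)] at h1
  rw [abs_of_nonpos (by linarith)] at h2
  rw [abs_of_nonpos (by linarith)] at h3
  unfold gp
  linarith

lemma exists_dist_le_of_isGeodesicFrom_of_le (hX : DeltaHyperbolic X δ)
    (hσ : IsQuasiGeodesic σ c) {a b t : ℝ} (hab : a ≤ b) {γ : ℝ → X}
    (hγ : IsGeodesicFrom γ (σ a) (σ b)) (ht : t ∈ Icc 0 (dist (σ a) (σ b))) :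
    ∃ s, dist (γ t) (σ s) ≤ 4 * c + 4 * δ := by
  -- `σ s₀` is at distance `t ± c` from `σ a`
  set s₀ := min (a + t) b with hs₀def
  have hs₀ : |dist (σ a) (σ s₀) - t| ≤ c := by
    rcases min_cases (a + t) b with ⟨h, hle⟩ | ⟨h, hlt⟩
    · have := hσ a (a + t)
      rw [show a - (a + t) = -t by ring, abs_neg, abs_of_nonneg ht.1] at this
      rw [hs₀def, h, abs_le]; constructor <;> linarith
    · have := (hσ a b).2
      rw [abs_of_nonpos (by linarith)] at this
      rw [hs₀def, h, abs_le]; constructor <;> linarith [ht.2]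
  have hgp := hσ.gp_le (s := s₀) (le_min (by linarith [ht.1]) hab) (min_le_right _ _)
  obtain ⟨t', ht', hdt'⟩ := hγ.exists_dist_le_gp_add hX (σ s₀)
  have htt' : |t - t'| ≤ c + (3 * c / 2 + 2 * δ) := by
    have h1 := dist_triangle (σ a) (σ s₀) (γ t')
    have h2 := dist_triangle (σ a) (γ t') (σ s₀)
    rw [hγ.dist_left ht'] at h1 h2
    rw [abs_le] at hs₀ ⊢
    constructor <;> linarith [dist_comm (γ t') (σ s₀)]
  refine ⟨s₀, ?_⟩
  calc dist (γ t) (σ s₀) ≤ dist (γ t) (γ t') + dist (γ t') (σ s₀) := dist_triangle _ _ _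
    _ = |t - t'| + dist (σ s₀) (γ t') := by rw [hγ.2.2 t ht t' ht', dist_comm]
    _ ≤ 4 * c + 4 * δ := by linarith

lemma exists_dist_le_of_isGeodesicFrom (hX : DeltaHyperbolic X δ)
    (hσ : IsQuasiGeodesic σ c) (a b : ℝ) {γ : ℝ → X} {t : ℝ}
    (hγ : IsGeodesicFrom γ (σ a) (σ b)) (ht : t ∈ Icc 0 (dist (σ a) (σ b))) :
    ∃ s, dist (γ t) (σ s) ≤ 4 * c + 4 * δ := by
  rcases le_total a b with hab | hba
  · exact hσ.exists_dist_le_of_isGeodesicFrom_of_le hX hab hγ ht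
  · have hσ' := hσ.comp_sub (a + b)
    obtain ⟨s, hs⟩ := hσ'.exists_dist_le_of_isGeodesicFrom_of_le hX hba
      (by simpa only [add_sub_cancel_right, add_sub_cancel_left] using hγ)
      (by simpa only [add_sub_cancel_right, add_sub_cancel_left] using ht)
    exact ⟨a + b - s, hs⟩

lemma exists_dist_le_of_gp_le (hX : DeltaHyperbolic X δ) (hσ : IsQuasiGeodesic σ c)
    {P Q w : X} {a b R E : ℝ} (hP : dist P (σ a) ≤ R) (hQ : dist Q (σ b) ≤ R)
    (hw : gp w P Q ≤ E) (hwP : R + E + 4 * δ < dist w P) (hwQ : R + E + 4 * δ < dist w Q) :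
    ∃ s, dist w (σ s) ≤ E + 4 * c + 8 * δ := by
  obtain ⟨β, hβ⟩ := hX.2.1 P Q
  obtain ⟨t, ht, hwt⟩ := hβ.exists_dist_le_gp_add hX w
  obtain ⟨γ, hγ⟩ := hX.2.1 (σ a) (σ b)
  obtain ⟨t', ht', htt'⟩ := hβ.exists_dist_le_of_dist_le hX hγ hP hQ ht
    (by linarith [dist_triangle w (β t) P]) (by linarith [hX.1, dist_triangle w (β t) Q])
  obtain ⟨s, hs⟩ := hσ.exists_dist_le_of_isGeodesicFrom hX a b hγ ht'
  exact ⟨s, by linarith [dist_triangle4 w (β t) (γ t') (σ s)]⟩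

lemma exists_dist_le_of_forall_dist_le (hX : DeltaHyperbolic X δ) (hσ : IsQuasiGeodesic σ c)
    {α : ℝ → X} (hα : IsQuasiGeodesic α c) {r W : ℝ}
    (hW : ∀ t, dist (σ t) (α (t + r)) ≤ W) :
    ∃ s, dist (σ 0) (α s) ≤ 11 * c / 2 + 8 * δ := by
  have hc := hσ.nonneg
  set T := W + 5 * c / 2 + 4 * δ + 1 with hTdef
  have hT : 0 ≤ T := by linarith [hX.1, dist_nonneg.trans (hW 0)]
  have hfar (u : ℝ) (hu : |0 - u| = T) : T - c ≤ dist (σ 0) (σ u) := by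
    simpa only [hu] using (hσ 0 u).1
  obtain ⟨s, hs⟩ := hα.exists_dist_le_of_gp_le hX (hW (-T)) (hW T) (hσ.gp_le (by linarith) hT)
    (by linarith [hfar (-T) (by simp [abs_of_nonneg hT])])
    (by linarith [hfar T (by simp [abs_of_nonneg hT])])
  exact ⟨s, by linarith⟩

end IsQuasiGeodesic

end QuasiGeodesic

section Action

variable {G : Type*} [Group G] {X : Type*} [MetricSpace X] [MulAction G X]

namespace IsometricAction

variable (hiso : IsometricAction G X)
include hiso

lemma dist_smul (h : G) (x y : X) : dist (h • x) (h • y) = dist x y :=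
  (hiso h).dist_eq x y

lemma gp_smul (h : G) (w x y : X) : gp (h • w) (h • x) (h • y) = gp w x y := by
  simp only [gp, hiso.dist_smul]

lemma exists_hasTranslationLength (g : G) (x₀ : X) : ∃ τ, HasTranslationLength g x₀ τ := by
  have hsub : Subadditive fun m : ℕ => dist x₀ (g ^ m • x₀) := fun a b => by
    have h : dist (g ^ a • x₀) (g ^ (a + b) • x₀) = dist x₀ (g ^ b • x₀) := by
      rw [pow_add, mul_smul, hiso.dist_smul]
    exact (dist_triangle _ _ _).trans_eq (by rw [h])
  exact ⟨hsub.lim, hsub.tendsto_lim ⟨0, by rintro _ ⟨m, rfl⟩; positivity⟩⟩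

lemma dist_pow_smul_le {α : ℝ → X} {g : G} {τ C₀ : ℝ}
    (hα : ∀ t, dist (g • α t) (α (t + τ)) ≤ C₀) (k : ℕ) (t : ℝ) :
    dist (g ^ k • α t) (α (t + k * τ)) ≤ k * C₀ := by
  induction k with
  | zero => simp
  | succ k ih =>
    have h := hα (t + k * τ)
    rw [pow_succ', mul_smul]
    push_cast
    calc dist (g • g ^ k • α t) (α (t + (k + 1) * τ))
        ≤ dist (g • g ^ k • α t) (g • α (t + k * τ)) +
            dist (g • α (t + k * τ)) (α (t + (k + 1) * τ)) := dist_triangle _ _ _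
      _ ≤ k * C₀ + C₀ := by
          rw [hiso.dist_smul, show t + (k + 1) * τ = t + k * τ + τ by ring]; linarith
      _ = (k + 1) * C₀ := by ring

lemma dist_inv_pow_smul_le {α : ℝ → X} {g : G} {τ C₀ : ℝ}
    (hα : ∀ t, dist (g • α t) (α (t + τ)) ≤ C₀) (k : ℕ) (t : ℝ) :
    dist ((g ^ k)⁻¹ • α t) (α (t + -(k * τ))) ≤ k * C₀ := by
  have h := hiso.dist_pow_smul_le hα k (t + -(k * τ))
  rwa [neg_add_cancel_right, ← hiso.dist_smul (g ^ k)⁻¹, inv_smul_smul, dist_comm] at h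

lemma exists_dist_smul_le {δ c : ℝ} (hX : DeltaHyperbolic X δ) {α : ℝ → X}
    (hα : IsQuasiGeodesic α c) {h : G} {r W : ℝ} (hW : ∀ t, dist (h • α t) (α (t + r)) ≤ W)
    (x : X) : ∃ s, dist (h • x) (α s) ≤ dist x (α 0) + (11 * c / 2 + 8 * δ) := by
  obtain ⟨s, hs⟩ := (hα.comp_isometry (hiso h)).exists_dist_le_of_forall_dist_le hX hα hW
  refine ⟨s, ?_⟩
  have h1 := dist_triangle (h • x) (h • α 0) (α s)
  rw [hiso.dist_smul] at h1
  exact h1.trans (add_le_add_right hs _)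

end IsometricAction

lemma HasTranslationLength.ge_of_forall_mul_le {g : G} {x₀ : X} {τ a : ℝ}
    (hτ : HasTranslationLength g x₀ τ) (ha : ∀ m : ℕ, m * a ≤ dist x₀ (g ^ m • x₀)) : a ≤ τ := by
  refine ge_of_tendsto hτ ?_
  filter_upwards [eventually_gt_atTop 0] with m hm
  rw [le_div_iff₀ (by exact_mod_cast hm), mul_comm]
  exact ha m

end Action

section CyclicWord

variable {G : Type*} [Group G]

/-- `g₁ ⋯ gⱼ` in the periodic word `g₁ ⋯ gₙ g₁ ⋯ gₙ ⋯`, where `gᵢ = gs i`. -/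
def cyclicProd (gs : ℕ → G) (n j : ℕ) : G :=
  ((List.range j).map fun l => gs (l % n + 1)).prod

variable {gs : ℕ → G} {n : ℕ}

@[simp]
lemma cyclicProd_zero : cyclicProd gs n 0 = 1 := rfl

lemma cyclicProd_succ (j : ℕ) : cyclicProd gs n (j + 1) = cyclicProd gs n j * gs (j % n + 1) := by
  simp [cyclicProd, List.range_succ]

lemma cyclicProd_of_le {j : ℕ} (hj : j ≤ n) :
    cyclicProd gs n j = ((List.range j).map fun l => gs (l + 1)).prod := by
  unfold cyclicProd
  congr 1
  refine List.map_congr_left fun l hl => ?_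
  rw [Nat.mod_eq_of_lt ((List.mem_range.1 hl).trans_le hj)]

lemma cyclicProd_period_add (j : ℕ) :
    cyclicProd gs n (n + j) = cyclicProd gs n n * cyclicProd gs n j := by
  induction j with
  | zero => simp
  | succ j ih => rw [← add_assoc, cyclicProd_succ, ih, cyclicProd_succ, Nat.add_mod_left, mul_assoc]

lemma cyclicProd_mul_add (m j : ℕ) :
    cyclicProd gs n (m * n + j) = cyclicProd gs n n ^ m * cyclicProd gs n j := by
  induction m with
  | zero => simp
  | succ m ih =>
    rw [show (m + 1) * n + j = n + (m * n + j) by ring, cyclicProd_period_add, ih, pow_succ',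
      mul_assoc]

lemma cyclicProd_mul (m : ℕ) : cyclicProd gs n (m * n) = cyclicProd gs n n ^ m := by
  simpa using cyclicProd_mul_add (gs := gs) m 0

variable {X : Type*} [MetricSpace X] [MulAction G X] {x₀ : X}

/-- The Gromov product `(g_{j-1}⁻¹ x₀ | g_j x₀)_{x₀}` at the `j`-th corner of the path through
the points `cyclicProd gs n j • x₀`, indices taken mod `n` (so `g₀ = gs 0` stands for `gₙ`). -/
def cornerGp (x₀ : X) (gs : ℕ → G) (n j : ℕ) : ℝ :=
  gp x₀ ((gs (j % n))⁻¹ • x₀) (gs (j % n + 1) • x₀)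

lemma cornerGp_add_period (j : ℕ) : cornerGp x₀ gs n (j + n) = cornerGp x₀ gs n j := by
  simp only [cornerGp, Nat.add_mod_right]

lemma cornerGp_mul_add (m j : ℕ) : cornerGp x₀ gs n (m * n + j) = cornerGp x₀ gs n j := by
  simp only [cornerGp, Nat.mul_add_mod']

lemma cornerGp_mul (m : ℕ) : cornerGp x₀ gs n (m * n) = cornerGp x₀ gs n 0 := by
  simpa using cornerGp_mul_add (x₀ := x₀) (gs := gs) m 0

lemma cornerGp_of_lt {j : ℕ} (hj : j < n) :
    cornerGp x₀ gs n j = gp x₀ ((gs j)⁻¹ • x₀) (gs (j + 1) • x₀) := by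
  simp only [cornerGp, Nat.mod_eq_of_lt hj]

lemma cornerGp_add_one (h0 : gs 0 = gs n) (h1 : gs (n + 1) = gs 1) (j : ℕ) :
    cornerGp x₀ gs n (j + 1) = gp x₀ ((gs (j % n + 1))⁻¹ • x₀) (gs (j % n + 1 + 1) • x₀) := by
  have e0 := apply_add_one_mod_add h0 h1 j (k := 0) zero_le_one
  have e1 := apply_add_one_mod_add h0 h1 j (k := 1) le_rfl
  simp only [add_zero] at e0
  simp only [cornerGp, e0, e1]

lemma cornerGp_eq (h0 : gs 0 = gs n) (h1 : gs (n + 1) = gs 1) {i : ℕ} (hi : 1 ≤ i) (hin : i ≤ n) :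
    cornerGp x₀ gs n i = gp x₀ ((gs i)⁻¹ • x₀) (gs (i + 1) • x₀) := by
  obtain ⟨j, rfl⟩ := Nat.exists_eq_add_of_le' hi
  rw [cornerGp_add_one h0 h1, Nat.mod_eq_of_lt (by omega)]

variable (hiso : IsometricAction G X)
include hiso

lemma dist_cyclicProd_succ (j : ℕ) :
    dist (cyclicProd gs n j • x₀) (cyclicProd gs n (j + 1) • x₀) =
      dist x₀ (gs (j % n + 1) • x₀) := by
  rw [cyclicProd_succ, mul_smul, hiso.dist_smul]

lemma gp_cyclicProd_succ (j : ℕ) :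
    gp (cyclicProd gs n (j + 1) • x₀) (cyclicProd gs n j • x₀) (cyclicProd gs n (j + 2) • x₀) =
      gp x₀ ((gs (j % n + 1))⁻¹ • x₀) (gs ((j + 1) % n + 1) • x₀) := by
  have e1 : cyclicProd gs n j • x₀ = cyclicProd gs n (j + 1) • (gs (j % n + 1))⁻¹ • x₀ := by
    rw [cyclicProd_succ, mul_smul, smul_inv_smul]
  have e2 : cyclicProd gs n (j + 2) • x₀ = cyclicProd gs n (j + 1) • gs ((j + 1) % n + 1) • x₀ := by
    rw [← mul_smul, ← cyclicProd_succ]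
  rw [e1, e2, hiso.gp_smul]

lemma isGromovChain_cyclicProd (hn : 0 < n) (h0 : gs 0 = gs n) (h1 : gs (n + 1) = gs 1) {C : ℝ}
    (hgs : ∀ i, 1 ≤ i → i ≤ n →
      gp x₀ ((gs (i - 1))⁻¹ • x₀) (gs i • x₀) + gp x₀ ((gs i)⁻¹ • x₀) (gs (i + 1) • x₀) + C
        ≤ dist x₀ (gs i • x₀)) (N : ℕ) :
    IsGromovChain (fun j => cyclicProd gs n j • x₀) (cornerGp x₀ gs n) C N where
  nonneg _ := gp_nonneg _ _ _
  add_le_dist j _ := by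
    have h := hgs (j % n + 1) le_add_self (Nat.mod_lt j hn)
    rwa [Nat.add_sub_cancel, ← cornerGp_add_one h0 h1, ← dist_cyclicProd_succ hiso] at h
  gp_le j _ := by
    rw [gp_cyclicProd_succ hiso, apply_add_one_mod_add h0 h1 j le_rfl, cornerGp_add_one h0 h1]

lemma sum_Icc_eq_sum_range_cornerGp (h0 : gs 0 = gs n) (h1 : gs (n + 1) = gs 1) (C : ℝ) :
    ∑ i ∈ Finset.Icc 1 n, (dist x₀ (gs i • x₀) - gp x₀ ((gs (i - 1))⁻¹ • x₀) (gs i • x₀) -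
        gp x₀ ((gs i)⁻¹ • x₀) (gs (i + 1) • x₀) - C) =
      ∑ j ∈ Finset.range n, (dist (cyclicProd gs n j • x₀) (cyclicProd gs n (j + 1) • x₀) -
        cornerGp x₀ gs n j - cornerGp x₀ gs n (j + 1) - C) := by
  rw [← Finset.Ico_add_one_right_eq_Icc, Finset.sum_Ico_eq_sum_range, Nat.add_sub_cancel]
  refine Finset.sum_congr rfl fun j hj => ?_
  have hj := Finset.mem_range.1 hj
  rw [add_comm 1 j, Nat.add_sub_cancel, dist_cyclicProd_succ hiso, Nat.mod_eq_of_lt hj,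
    cornerGp_of_lt hj, cornerGp_eq h0 h1 le_add_self hj]

end CyclicWord

section OrbitPath

variable {G : Type*} [Group G] {X : Type*} [MetricSpace X] [MulAction G X] {δ C : ℝ} {x₀ : X}
  {gs : ℕ → G} {n : ℕ} (hX : DeltaHyperbolic X δ) (hC : 9 * δ < C)
  (hz : ∀ N, IsGromovChain (fun j => cyclicProd gs n j • x₀) (cornerGp x₀ gs n) C N)
include hX hC hz

theorem exists_mem_geodesic_dist_cyclicProd_le {γ : ℝ → X}
    (hγ : IsGeodesicFrom γ x₀ (cyclicProd gs n n • x₀)) {i : ℕ} (hi : 0 < i) (hin : i ≤ n) :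
    ∃ u ∈ γ '' Icc 0 (dist x₀ (cyclicProd gs n n • x₀)),
      dist u (cyclicProd gs n i • x₀) ≤ cornerGp x₀ gs n i + 8 * δ := by
  have hδ := hX.1
  rcases hin.lt_or_eq with hin | rfl
  · have hgp := (hz n).gp_zero_last_le hX.gromovFourPoint (by linarith) hi hin
    simp only [cyclicProd_zero, one_smul] at hgp
    obtain ⟨t, ht, hwt⟩ := hγ.exists_dist_le_gp_add hX (cyclicProd gs n i • x₀)
    exact ⟨γ t, ⟨t, ht, rfl⟩, by rw [dist_comm]; linarith⟩
  · refine ⟨_, ⟨_, ⟨dist_nonneg, le_rfl⟩, hγ.2.1⟩, ?_⟩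
    rw [dist_self]
    linarith [(hz 0).nonneg i]

variable (hiso : IsometricAction G X)
include hiso

theorem exists_hasTranslationLength_ge (hn : 0 < n) :
    ∃ τ, 0 < τ ∧ HasTranslationLength (cyclicProd gs n n) x₀ τ ∧
      ∑ j ∈ Finset.range n, (dist (cyclicProd gs n j • x₀) (cyclicProd gs n (j + 1) • x₀) -
        cornerGp x₀ gs n j - cornerGp x₀ gs n (j + 1) - C) ≤ τ := by
  have hδ := hX.1
  set f := fun j => dist (cyclicProd gs n j • x₀) (cyclicProd gs n (j + 1) • x₀) -
    2 * cornerGp x₀ gs n j - 2 * (3 * δ) with hf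
  have hper : Function.Periodic f n := fun j => by
    simp only [hf, dist_cyclicProd_succ hiso, Nat.add_mod_right, cornerGp_add_period]
  have hprog (m : ℕ) : m * ∑ j ∈ Finset.range n, f j ≤ dist x₀ (cyclicProd gs n n ^ m • x₀) := by
    have h := (hz (m * n)).sum_le_dist hX.gromovFourPoint (by linarith) (m * n) le_rfl
    rwa [hper.sum_range_mul, nsmul_eq_mul, cyclicProd_zero, one_smul, cyclicProd_mul] at h
  obtain ⟨τ, hτ⟩ := hiso.exists_hasTranslationLength (cyclicProd gs n n) x₀
  have hsum : ∑ j ∈ Finset.range n, f j =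
      ∑ j ∈ Finset.range n, (dist (cyclicProd gs n j • x₀) (cyclicProd gs n (j + 1) • x₀) -
        cornerGp x₀ gs n j - cornerGp x₀ gs n (j + 1) - C) + n * (C - 6 * δ) := by
    have hsub := Finset.sum_range_sub (cornerGp x₀ gs n) n
    have hqn : cornerGp x₀ gs n n = cornerGp x₀ gs n 0 := by
      simpa using cornerGp_add_period (x₀ := x₀) (gs := gs) (n := n) 0
    rw [hqn, sub_self] at hsub
    simp only [hf, Finset.sum_sub_distrib, Finset.sum_const, Finset.card_range, nsmul_eq_mul,
      ← Finset.mul_sum] at hsub ⊢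
    linarith
  have hnonneg : 0 ≤ ∑ j ∈ Finset.range n, (dist (cyclicProd gs n j • x₀)
      (cyclicProd gs n (j + 1) • x₀) - cornerGp x₀ gs n j - cornerGp x₀ gs n (j + 1) - C) :=
    Finset.sum_nonneg fun j hj => by
      linarith [(hz n).add_le_dist j (Finset.mem_range.1 hj)]
  have hpos : 0 < (n : ℝ) * (C - 6 * δ) := mul_pos (Nat.cast_pos.2 hn) (by linarith)
  have hle := hτ.ge_of_forall_mul_le hprog
  exact ⟨τ, by linarith, hτ, by linarith⟩

lemma gp_cyclicProd_le {m i : ℕ} (hi : i < m * n) :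
    gp (cyclicProd gs n i • x₀) ((cyclicProd gs n n ^ m)⁻¹ • x₀) (cyclicProd gs n n ^ m • x₀) ≤
      cornerGp x₀ gs n i + 6 * δ := by
  have h := (hz (m * n + m * n)).gp_zero_last_le hX.gromovFourPoint (by linarith [hX.1])
    (i := m * n + i) (by omega) (by omega)
  simp only [cyclicProd_mul_add, cornerGp_mul_add, cyclicProd_zero, one_smul, cyclicProd_mul,
    mul_smul] at h
  rw [← hiso.gp_smul (cyclicProd gs n n ^ m), smul_inv_smul]
  linarith

lemma dist_cyclicProd_ge {m i : ℕ} (hi : i ≤ m * n) :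
    ((m * n - i : ℕ) : ℝ) * (C - 6 * δ) - cornerGp x₀ gs n 0 ≤
        dist (cyclicProd gs n i • x₀) ((cyclicProd gs n n ^ m)⁻¹ • x₀) ∧
      ((m * n - i : ℕ) : ℝ) * (C - 6 * δ) - cornerGp x₀ gs n 0 ≤
        dist (cyclicProd gs n i • x₀) (cyclicProd gs n n ^ m • x₀) := by
  have hC' : 2 * (3 * δ) < C := by linarith [hX.1]
  have hle : ((m * n - i : ℕ) : ℝ) ≤ ((m * n + i : ℕ) : ℝ) := by exact_mod_cast (by omega)
  have hfwd := (hz (m * n + i)).le_dist hX.gromovFourPoint hC' le_rfl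
  have hbwd := (hz (m * n + m * n)).reverse.le_dist hX.gromovFourPoint hC' (k := m * n - i)
    (by omega)
  simp only [Nat.sub_zero, show m * n + m * n - (m * n - i) = m * n + i by omega] at hbwd
  simp only [cyclicProd_mul_add, cornerGp_mul_add, cornerGp_mul, cyclicProd_zero, one_smul,
    cyclicProd_mul, mul_smul] at hfwd hbwd
  have e1 : dist (cyclicProd gs n i • x₀) ((cyclicProd gs n n ^ m)⁻¹ • x₀) =
      dist x₀ (cyclicProd gs n n ^ m • cyclicProd gs n i • x₀) := by
    rw [← hiso.dist_smul (cyclicProd gs n n ^ m), smul_inv_smul, dist_comm]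
  have e2 : dist (cyclicProd gs n i • x₀) (cyclicProd gs n n ^ m • x₀) =
      dist (cyclicProd gs n n ^ m • cyclicProd gs n n ^ m • x₀)
        (cyclicProd gs n n ^ m • cyclicProd gs n i • x₀) := by
    rw [hiso.dist_smul, dist_comm]
  have hmono := mul_le_mul_of_nonneg_right hle (show 0 ≤ C - 6 * δ by linarith [hX.1])
  rw [e1, e2]
  constructor <;> linarith

theorem exists_axis_dist_cyclicProd_le (hn : 0 < n) {α : ℝ → X}
    (hα : IsAxis δ (cyclicProd gs n n) x₀ α) (i : ℕ) :
    ∃ s, dist (α s) (cyclicProd gs n i • x₀) ≤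
      cornerGp x₀ gs n i + 14 * δ + 4 * (100 * (δ + 1)) := by
  have hδ := hX.1
  obtain ⟨hαq, τ, -, -, C₀, hC₀⟩ := hα
  have hαq : IsQuasiGeodesic α (100 * (δ + 1)) := hαq
  set R := dist x₀ (α 0) + (11 * (100 * (δ + 1)) / 2 + 8 * δ) with hR
  set E := cornerGp x₀ gs n i + 6 * δ with hE
  -- the orbit points `g^{∓m} x₀` stay near `α`, while `cyclicProd gs n i • x₀` lies deep between
  obtain ⟨m', hm'⟩ := Archimedean.arch (R + E + 4 * δ + cornerGp x₀ gs n 0)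
    (show 0 < C - 6 * δ by linarith)
  rw [nsmul_eq_mul] at hm'
  set m := m' + i + 1
  have him : m' + i < m * n := by have := Nat.le_mul_of_pos_right m hn; omega
  obtain ⟨a, ha⟩ := hiso.exists_dist_smul_le hX hαq (hiso.dist_inv_pow_smul_le hC₀ m) x₀
  obtain ⟨b, hb⟩ := hiso.exists_dist_smul_le hX hαq (hiso.dist_pow_smul_le hC₀ m) x₀
  obtain ⟨hfar₁, hfar₂⟩ := dist_cyclicProd_ge hX hC hz hiso (m := m) (i := i) (by omega)
  have hm'' : (m' : ℝ) + 1 ≤ ((m * n - i : ℕ) : ℝ) := by exact_mod_cast (by omega)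
  have hdeep := mul_le_mul_of_nonneg_right hm'' (show 0 ≤ C - 6 * δ by linarith)
  obtain ⟨s, hs⟩ := hαq.exists_dist_le_of_gp_le hX ha hb
    (gp_cyclicProd_le hX hC hz hiso (m := m) (i := i) (by omega)) (by linarith) (by linarith)
  exact ⟨s, by rw [dist_comm]; linarith⟩

end OrbitPath

end RandomSubgroups

/-- There is a constant `C > 0`, depending only on `δ`, such that if an
isometry `g` of a δ-hyperbolic geodesic space is a product `g = g₁ ⋯ g_n` with
`d(x₀, g_i x₀) ≥ (g_{i-1}⁻¹x₀|g_i x₀) + (g_i⁻¹x₀|g_{i+1}x₀) + C` (cyclic conventions),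
then `τ(g) ≥ Σ (d(x₀, g_i x₀) - (g_{i-1}⁻¹x₀|g_i x₀) - (g_i⁻¹x₀|g_{i+1}x₀) - C)`; in
particular `g` is hyperbolic. Moreover any geodesic from `x₀` to `g x₀`, and any axis
of `g`, passes within `(g_{i-1}⁻¹x₀|g_i x₀) + (g_i⁻¹x₀|g_{i+1}x₀) + C` of each point
`g₁ ⋯ g_i x₀`. -/
theorem stmt_5 :
    ∃ C : ℝ → ℝ, ∀ δ : ℝ, 0 ≤ δ → 0 < C δ ∧
      ∀ (X : Type) [MetricSpace X], DeltaHyperbolic X δ →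
      ∀ (G : Type) [Group G] [MulAction G X], IsometricAction G X →
      ∀ (x₀ : X) (n : ℕ), 1 ≤ n → ∀ gs : ℕ → G,
        gs 0 = gs n → gs (n + 1) = gs 1 →
        (∀ i, 1 ≤ i → i ≤ n →
          gp x₀ ((gs (i - 1))⁻¹ • x₀) (gs i • x₀) +
              gp x₀ ((gs i)⁻¹ • x₀) (gs (i + 1) • x₀) + C δ
            ≤ dist x₀ (gs i • x₀)) →
        ∀ g : G, g = ((List.range n).map fun j => gs (j + 1)).prod →
          (∃ τ : ℝ, 0 < τ ∧ HasTranslationLength g x₀ τ ∧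
            (∑ i ∈ Finset.Icc 1 n, (dist x₀ (gs i • x₀) -
                gp x₀ ((gs (i - 1))⁻¹ • x₀) (gs i • x₀) -
                gp x₀ ((gs i)⁻¹ • x₀) (gs (i + 1) • x₀) - C δ)) ≤ τ) ∧
          (∀ γ : ℝ → X, IsGeodesicFrom γ x₀ (g • x₀) →
            ∀ i, 1 ≤ i → i ≤ n →
              ∃ u ∈ γ '' Icc (0 : ℝ) (dist x₀ (g • x₀)),
                dist u ((((List.range i).map fun j => gs (j + 1)).prod) • x₀) ≤
                  gp x₀ ((gs (i - 1))⁻¹ • x₀) (gs i • x₀) +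
                    gp x₀ ((gs i)⁻¹ • x₀) (gs (i + 1) • x₀) + C δ) ∧
          (∀ α : ℝ → X, IsAxis δ g x₀ α →
            ∀ i, 1 ≤ i → i ≤ n →
              ∃ u ∈ Set.range α,
                dist u ((((List.range i).map fun j => gs (j + 1)).prod) • x₀) ≤
                  gp x₀ ((gs (i - 1))⁻¹ • x₀) (gs i • x₀) +
                    gp x₀ ((gs i)⁻¹ • x₀) (gs (i + 1) • x₀) + C δ) := by
  refine ⟨fun δ => 1000 * (δ + 1), fun δ hδ => ⟨by positivity, ?_⟩⟩
  intro X _ hX G _ _ hiso x₀ n hn gs h0 h1 hgs g hg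
  have hC : 9 * δ < 1000 * (δ + 1) := by linarith
  have hz := isGromovChain_cyclicProd hiso hn h0 h1 hgs
  have hprod (i : ℕ) (hi : i ≤ n) :
      ((List.range i).map fun j => gs (j + 1)).prod = cyclicProd gs n i :=
    (cyclicProd_of_le hi).symm
  rw [hg, hprod n le_rfl, sum_Icc_eq_sum_range_cornerGp hiso h0 h1]
  refine ⟨exists_hasTranslationLength_ge hX hC hz hiso hn, fun γ hγ i hi hin => ?_,
    fun α hα i hi hin => ?_⟩ <;> rw [hprod i hin, ← cornerGp_eq h0 h1 hi hin]
  · obtain ⟨u, hu, hdist⟩ := exists_mem_geodesic_dist_cyclicProd_le hX hC hz hγ hi hin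
    exact ⟨u, hu, by linarith [gp_nonneg x₀ ((gs (i - 1))⁻¹ • x₀) (gs i • x₀)]⟩
  · obtain ⟨s, hs⟩ := exists_axis_dist_cyclicProd_le hX hC hz hiso hn hα i
    exact ⟨α s, ⟨s, rfl⟩, by linarith [gp_nonneg x₀ ((gs (i - 1))⁻¹ • x₀) (gs i • x₀)]⟩
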